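/- arXiv:1902.02242 — 4 statements merged into one kernel-verified Lean document; each statement's English description precedes it below -/
import Mathlib

section
/- Let H be a finite set (a hypothesis class), and let a, b ∈ ℝ^H be arbitrary vectors and γ ≥ 0. Consider the linear program: minimize a·x over x in the standard probability simplex Δ(H) subject to the two constraints b·x ≤ γ and b·x ≥ −γ. If the feasible region is nonempty, then there exists an optimal solution x* of this program whose support has size at most 2 (i.e., x* has at most 2 nonzero coordinates). -/
open Finset

private lemma sum_mul_three {H : Type*} [Fintype H] [DecidableEq H]
    (f : H → ℝ) {h1 h2 h3 : H} (h12 : h1 ≠ h2) (h13 : h1 ≠ h3) (h23 : h2 ≠ h3)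
    (v1 v2 v3 : ℝ) :
    ∑ h, f h * ((if h = h1 then v1 else 0) + (if h = h2 then v2 else 0) +
      (if h = h3 then v3 else 0)) = f h1 * v1 + f h2 * v2 + f h3 * v3 := by
  simp only [mul_add, Finset.sum_add_distrib, mul_ite, mul_zero]
  rw [Finset.sum_ite_eq' Finset.univ h1 (fun h => f h * v1),
      Finset.sum_ite_eq' Finset.univ h2 (fun h => f h * v2),
      Finset.sum_ite_eq' Finset.univ h3 (fun h => f h * v3)]
  simp

/-- Moving from a feasible point along a direction `d` in the kernel of both the
sum constraint and the `b` constraint, supported inside the support of `x`,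
with nonincreasing objective, strictly reduces the support. -/
private lemma move_step {H : Type*} [Fintype H] [DecidableEq H]
    (a b : H → ℝ) (γ : ℝ) (x d : H → ℝ)
    (hx0 : ∀ h, 0 ≤ x h) (hx1 : (∑ h, x h) = 1) (hxb : |∑ h, b h * x h| ≤ γ)
    (hd1 : ∑ h, d h = 0) (hdb : ∑ h, b h * d h = 0) (hda : ∑ h, a h * d h ≤ 0)
    (hdne : d ≠ 0) (hdsupp : ∀ h, d h ≠ 0 → x h ≠ 0) :
    ∃ x' : H → ℝ, ((∀ h, 0 ≤ x' h) ∧ (∑ h, x' h) = 1 ∧ |∑ h, b h * x' h| ≤ γ) ∧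
      (∑ h, a h * x' h) ≤ (∑ h, a h * x h) ∧
      {h | x' h ≠ 0}.ncard < {h | x h ≠ 0}.ncard := by
  classical
  -- there is a coordinate where d is negative
  have hneg : ∃ h, d h < 0 := by
    by_contra hcon
    push_neg at hcon
    have : ∀ h ∈ Finset.univ, d h = 0 :=
      (Finset.sum_eq_zero_iff_of_nonneg (fun h _ => hcon h)).1 hd1
    exact hdne (funext fun h => this h (Finset.mem_univ h))
  set neg : Finset H := Finset.univ.filter (fun h => d h < 0) with hnegdef
  have hnegne : neg.Nonempty := by
    obtain ⟨h, hh⟩ := hneg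
    exact ⟨h, by simp [hnegdef, hh]⟩
  obtain ⟨h₀, h₀mem, h₀min⟩ := Finset.exists_min_image neg (fun h => x h / (-d h)) hnegne
  have hd₀ : d h₀ < 0 := by simpa [hnegdef] using h₀mem
  set t : ℝ := x h₀ / (-d h₀) with htdef
  have ht0 : 0 ≤ t := div_nonneg (hx0 h₀) (by linarith)
  set x' : H → ℝ := fun h => x h + t * d h with hx'def
  have hx'0 : ∀ h, 0 ≤ x' h := by
    intro h
    rcases lt_or_ge (d h) 0 with hdh | hdh
    · have hle : t ≤ x h / (-d h) := h₀min h (by simp [hnegdef, hdh])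
      have h1 : t * (-d h) ≤ x h := by
        rw [← le_div_iff₀ (by linarith : (0:ℝ) < -d h)]; exact hle
      simp only [hx'def]; nlinarith
    · simp only [hx'def]
      have := mul_nonneg ht0 hdh
      linarith [hx0 h]
  have hsum' : ∀ f : H → ℝ, ∑ h, f h * x' h = ∑ h, f h * x h + t * ∑ h, f h * d h := by
    intro f
    simp only [hx'def, mul_add, Finset.sum_add_distrib, Finset.mul_sum]
    congr 1
    exact Finset.sum_congr rfl fun h _ => by ring
  have hx'1 : ∑ h, x' h = 1 := by
    have := hsum' (fun _ => 1)
    simpa [hd1, hx1] using this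
  have hx'b : |∑ h, b h * x' h| ≤ γ := by
    rw [hsum' b, hdb]; simpa using hxb
  have hx'a : ∑ h, a h * x' h ≤ ∑ h, a h * x h := by
    rw [hsum' a]
    nlinarith [mul_nonpos_of_nonneg_of_nonpos ht0 hda]
  -- support strictly shrinks: h₀ is removed
  have hd₀ne : d h₀ ≠ 0 := ne_of_lt hd₀
  have hx₀ne : x h₀ ≠ 0 := hdsupp h₀ hd₀ne
  have hx'h₀ : x' h₀ = 0 := by
    have : x h₀ / (-d h₀) * d h₀ = -x h₀ := by
      rw [div_neg, neg_mul, div_mul_cancel₀ _ hd₀ne]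
    simp only [hx'def, htdef]
    rw [this]; ring
  have hsubset : {h | x' h ≠ 0} ⊆ {h | x h ≠ 0} := by
    intro h hh
    simp only [Set.mem_setOf_eq] at hh ⊢
    intro hxh
    apply hh
    have hdh : d h = 0 := by
      by_contra hdh
      exact hdsupp h hdh hxh
    simp [hx'def, hxh, hdh]
  have hss : {h | x' h ≠ 0} ⊂ {h | x h ≠ 0} := by
    refine ⟨hsubset, fun hsub => ?_⟩
    have := hsub hx₀ne
    simp only [Set.mem_setOf_eq] at this
    exact this hx'h₀
  exact ⟨x', ⟨hx'0, hx'1, hx'b⟩, hx'a,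
    Set.ncard_lt_ncard hss (Set.toFinite _)⟩

/-- A feasible point with support of size at least 3 can be improved to one with
strictly smaller support and no larger objective. -/
private lemma reduce_step {H : Type*} [Fintype H] [DecidableEq H]
    (a b : H → ℝ) (γ : ℝ) (x : H → ℝ)
    (hx : (∀ h, 0 ≤ x h) ∧ (∑ h, x h) = 1 ∧ |∑ h, b h * x h| ≤ γ)
    (hcard : 3 ≤ {h | x h ≠ 0}.ncard) :
    ∃ x' : H → ℝ, ((∀ h, 0 ≤ x' h) ∧ (∑ h, x' h) = 1 ∧ |∑ h, b h * x' h| ≤ γ) ∧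
      (∑ h, a h * x' h) ≤ (∑ h, a h * x h) ∧
      {h | x' h ≠ 0}.ncard < {h | x h ≠ 0}.ncard := by
  classical
  obtain ⟨hx0, hx1, hxb⟩ := hx
  -- extract three distinct support elements
  set s : Finset H := Finset.univ.filter (fun h => x h ≠ 0) with hsdef
  have hscoe : {h | x h ≠ 0} = ↑s := by ext h; simp [hsdef]
  have hscard : 3 ≤ s.card := by
    rw [hscoe, Set.ncard_coe_finset] at hcard; exact hcard
  obtain ⟨u, hus, hucard⟩ := Finset.exists_subset_card_eq hscard
  obtain ⟨h1, h2, h3, h12, h13, h23, hu⟩ := Finset.card_eq_three.1 hucard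
  have hmem : ∀ h ∈ u, x h ≠ 0 := by
    intro h hh
    have := hus hh
    simpa [hsdef] using this
  have hx1ne : x h1 ≠ 0 := hmem h1 (by simp [hu])
  have hx2ne : x h2 ≠ 0 := hmem h2 (by simp [hu])
  have hx3ne : x h3 ≠ 0 := hmem h3 (by simp [hu])
  -- build a direction d supported on {h1,h2,h3}
  -- with ∑ d = 0, ∑ b d = 0, ∑ a d ≤ 0, d ≠ 0
  have main : ∀ v1 v2 v3 : ℝ, v1 + v2 + v3 = 0 →
      b h1 * v1 + b h2 * v2 + b h3 * v3 = 0 →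
      a h1 * v1 + a h2 * v2 + a h3 * v3 ≤ 0 →
      (v1 ≠ 0 ∨ v2 ≠ 0 ∨ v3 ≠ 0) →
      ∃ x' : H → ℝ, ((∀ h, 0 ≤ x' h) ∧ (∑ h, x' h) = 1 ∧ |∑ h, b h * x' h| ≤ γ) ∧
        (∑ h, a h * x' h) ≤ (∑ h, a h * x h) ∧
        {h | x' h ≠ 0}.ncard < {h | x h ≠ 0}.ncard := by
    intro v1 v2 v3 hv1 hvb hva hvne
    set d : H → ℝ := fun h => (if h = h1 then v1 else 0) + (if h = h2 then v2 else 0) +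
      (if h = h3 then v3 else 0) with hddef
    have hsum3 : ∀ f : H → ℝ, ∑ h, f h * d h = f h1 * v1 + f h2 * v2 + f h3 * v3 := by
      intro f
      exact sum_mul_three f h12 h13 h23 v1 v2 v3
    have hd1 : ∑ h, d h = 0 := by
      have := hsum3 (fun _ => 1)
      simpa [hv1] using this
    have hdb : ∑ h, b h * d h = 0 := by rw [hsum3 b]; exact hvb
    have hda : ∑ h, a h * d h ≤ 0 := by rw [hsum3 a]; exact hva
    have hdval : d h1 = v1 ∧ d h2 = v2 ∧ d h3 = v3 := by
      refine ⟨?_, ?_, ?_⟩ <;>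
        simp [hddef, h12, h13, h23, h12.symm, h13.symm, h23.symm]
    have hdne : d ≠ 0 := by
      intro hcon
      rcases hvne with hv | hv | hv
      · exact hv (by rw [← hdval.1, hcon]; rfl)
      · exact hv (by rw [← hdval.2.1, hcon]; rfl)
      · exact hv (by rw [← hdval.2.2, hcon]; rfl)
    have hdsupp : ∀ h, d h ≠ 0 → x h ≠ 0 := by
      intro h hh
      by_contra hxh
      apply hh
      have e1 : h ≠ h1 := fun e => hx1ne (e ▸ hxh)
      have e2 : h ≠ h2 := fun e => hx2ne (e ▸ hxh)
      have e3 : h ≠ h3 := fun e => hx3ne (e ▸ hxh)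
      simp [hddef, e1, e2, e3]
    exact move_step a b γ x d hx0 hx1 hxb hd1 hdb hda hdne hdsupp
  by_cases hb12 : b h1 = b h2
  · -- direction supported on {h1, h2}, sign chosen by the objective
    rcases le_total (a h1) (a h2) with hcmp | hcmp
    · exact main 1 (-1) 0 (by ring) (by rw [hb12]; ring) (by linarith) (Or.inl one_ne_zero)
    · exact main (-1) 1 0 (by ring) (by rw [hb12]; ring) (by linarith)
        (Or.inl (neg_ne_zero.2 one_ne_zero))
  · -- generic direction in the kernel of (1,1,1) and (b1,b2,b3)
    have hne3 : b h1 - b h2 ≠ 0 := sub_ne_zero.2 hb12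
    rcases le_total (a h1 * (b h2 - b h3) + a h2 * (b h3 - b h1) + a h3 * (b h1 - b h2)) 0
      with hcmp | hcmp
    · exact main (b h2 - b h3) (b h3 - b h1) (b h1 - b h2) (by ring) (by ring) hcmp
        (Or.inr (Or.inr hne3))
    · exact main (-(b h2 - b h3)) (-(b h3 - b h1)) (-(b h1 - b h2)) (by ring) (by ring)
        (by linarith) (Or.inr (Or.inr (neg_ne_zero.2 hne3)))

/-- A linear program over the probability simplex Δ(H) with the single
pair of constraints `|b·x| ≤ γ` admits an optimal solution supported on at most 2
coordinates, provided the feasible region is nonempty. -/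
theorem exists_optimal_sparse_solution {H : Type*} [Fintype H]
    (a b : H → ℝ) (γ : ℝ) (hγ : 0 ≤ γ)
    (hne : ∃ x : H → ℝ, (∀ h, 0 ≤ x h) ∧ (∑ h, x h) = 1 ∧ |∑ h, b h * x h| ≤ γ) :
    ∃ x : H → ℝ,
      ((∀ h, 0 ≤ x h) ∧ (∑ h, x h) = 1 ∧ |∑ h, b h * x h| ≤ γ) ∧
      (∀ y : H → ℝ, ((∀ h, 0 ≤ y h) ∧ (∑ h, y h) = 1 ∧ |∑ h, b h * y h| ≤ γ) →
        (∑ h, a h * x h) ≤ ∑ h, a h * y h) ∧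
      {h | x h ≠ 0}.ncard ≤ 2 := by
  classical
  set S : Set (H → ℝ) :=
    {x | (∀ h, 0 ≤ x h) ∧ (∑ h, x h) = 1 ∧ |∑ h, b h * x h| ≤ γ} with hSdef
  have hSne : S.Nonempty := hne
  have hsum_cont : Continuous fun x : H → ℝ => ∑ h, x h :=
    continuous_finset_sum _ fun h _ => continuous_apply h
  have hb_cont : Continuous fun x : H → ℝ => ∑ h, b h * x h :=
    continuous_finset_sum _ fun h _ => continuous_const.mul (continuous_apply h)
  have ha_cont : Continuous fun x : H → ℝ => ∑ h, a h * x h :=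
    continuous_finset_sum _ fun h _ => continuous_const.mul (continuous_apply h)
  have hSclosed : IsClosed S := by
    have hSeq : S = (⋂ h : H, {x : H → ℝ | 0 ≤ x h}) ∩
        ({x : H → ℝ | (∑ h, x h) = 1} ∩ {x : H → ℝ | |∑ h, b h * x h| ≤ γ}) := by
      ext x; simp [hSdef, Set.mem_iInter, and_assoc]
    rw [hSeq]
    exact ((isClosed_iInter fun h =>
        isClosed_le continuous_const (continuous_apply h)).inter
      ((isClosed_eq hsum_cont continuous_const).inter
        (isClosed_le hb_cont.abs continuous_const)))
  have hScompact : IsCompact S := by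
    have hbox : IsCompact (Set.pi Set.univ fun _ : H => Set.Icc (0:ℝ) 1) :=
      isCompact_univ_pi fun _ => isCompact_Icc
    refine hbox.of_isClosed_subset hSclosed ?_
    intro x hx h _
    refine ⟨hx.1 h, ?_⟩
    calc x h ≤ ∑ h', x h' :=
          Finset.single_le_sum (fun i _ => hx.1 i) (Finset.mem_univ h)
      _ = 1 := hx.2.1
  obtain ⟨x0, hx0S, hx0min⟩ := hScompact.exists_isMinOn hSne ha_cont.continuousOn
  -- shrink the support of x0 by induction
  have key : ∀ n : ℕ, ∀ x : H → ℝ, x ∈ S → {h | x h ≠ 0}.ncard ≤ n →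
      ∃ x', x' ∈ S ∧ (∑ h, a h * x' h) ≤ (∑ h, a h * x h) ∧
        {h | x' h ≠ 0}.ncard ≤ 2 := by
    intro n
    induction n with
    | zero => exact fun x hxS hle => ⟨x, hxS, le_refl _, by omega⟩
    | succ n ih =>
      intro x hxS hle
      by_cases hc : {h | x h ≠ 0}.ncard ≤ 2
      · exact ⟨x, hxS, le_refl _, hc⟩
      · have h3 : 3 ≤ {h | x h ≠ 0}.ncard := by omega
        obtain ⟨x', hx'S, hx'le, hx'card⟩ := reduce_step a b γ x hxS h3
        obtain ⟨x'', hA, hB, hC⟩ := ih x' hx'S (by omega)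
        exact ⟨x'', hA, le_trans hB hx'le, hC⟩
  obtain ⟨x', hx'S, hx'le, hx'card⟩ :=
    key ({h | x0 h ≠ 0}.ncard) x0 hx0S le_rfl
  refine ⟨x', hx'S, fun y hy => ?_, hx'card⟩
  exact le_trans hx'le (hx0min hy)
end

section
/- Let H be a finite class of classifiers h : X × {±1} → {±1}, and let D_E be a probability distribution on X × {±1} × {±1} (triples (x,a,y)) such that P_{D_E}(a = j, y = −1) > 0 for both j ∈ {±1}. Fix real costs c_j^{−1}, c_j^{+1} for finitely many examples x_1,…,x_n and a parameter γ ≥ 0. Consider the fair cost-sensitive classification problem: minimize E_{h∼π}[ Σ_{j=1}^n c_j^{h(x_j)} ] over π ∈ Δ(H) subject to |Δ_FPR(π, D_E)| ≤ γ. If the feasible region is nonempty, then this problem has an optimal solution π* that is a distribution over H with support size at most 2. -/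
open MeasureTheory

lemma sparse_key {H : Type*} [Fintype H] (c g : H → ℝ) (γ : ℝ)
    (hne : ∃ π : H → ℝ, (∀ h, 0 ≤ π h) ∧ (∑ h, π h) = 1 ∧ |∑ h, π h * g h| ≤ γ) :
    ∃ π : H → ℝ, ((∀ h, 0 ≤ π h) ∧ (∑ h, π h) = 1 ∧ |∑ h, π h * g h| ≤ γ) ∧
      (∀ π' : H → ℝ, ((∀ h, 0 ≤ π' h) ∧ (∑ h, π' h) = 1 ∧ |∑ h, π' h * g h| ≤ γ) →
        ∑ h, π h * c h ≤ ∑ h, π' h * c h) ∧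
      {h | π h ≠ 0}.ncard ≤ 2 := by
  classical
  set Feas : Set (H → ℝ) :=
    {π | (∀ h, 0 ≤ π h) ∧ (∑ h, π h) = 1 ∧ |∑ h, π h * g h| ≤ γ} with hFeasdef
  have hconts : ∀ f : H → ℝ, Continuous fun π : H → ℝ => ∑ h, π h * f h :=
    fun f => continuous_finset_sum _ fun h _ => (continuous_apply h).mul continuous_const
  -- Feas is compact
  have hclosed : IsClosed Feas := by
    have h1 : IsClosed {π : H → ℝ | ∀ h, 0 ≤ π h} := by
      have : {π : H → ℝ | ∀ h, 0 ≤ π h} = ⋂ h, {π : H → ℝ | 0 ≤ π h} := by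
        ext π; simp [Set.mem_iInter]
      rw [this]
      exact isClosed_iInter fun h => isClosed_le continuous_const (continuous_apply h)
    have h2 : IsClosed {π : H → ℝ | (∑ h, π h) = 1} := by
      have : Continuous fun π : H → ℝ => ∑ h, π h :=
        continuous_finset_sum _ fun h _ => continuous_apply h
      exact isClosed_eq this continuous_const
    have h3 : IsClosed {π : H → ℝ | |∑ h, π h * g h| ≤ γ} :=
      isClosed_le ((hconts g).abs) continuous_const
    have : Feas = {π : H → ℝ | ∀ h, 0 ≤ π h} ∩ ({π | (∑ h, π h) = 1} ∩
        {π | |∑ h, π h * g h| ≤ γ}) := by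
      ext π; simp [hFeasdef, and_assoc]
    rw [this]
    exact h1.inter (h2.inter h3)
  have hsubset : Feas ⊆ Set.pi Set.univ fun _ : H => Set.Icc (0:ℝ) 1 := by
    rintro π ⟨hnn, hsum, -⟩ h -
    refine ⟨hnn h, ?_⟩
    calc π h ≤ ∑ h', π h' := Finset.single_le_sum (fun i _ => hnn i) (Finset.mem_univ h)
    _ = 1 := hsum
  have hcomp : IsCompact Feas :=
    (isCompact_univ_pi fun _ => isCompact_Icc).of_isClosed_subset hclosed hsubset
  obtain ⟨π0, hπ0⟩ := hne
  obtain ⟨πm, hπmF, hπmmin⟩ := hcomp.exists_isMinOn ⟨π0, hπ0⟩ (hconts c).continuousOn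
  -- the set of support sizes of minimizers
  set T : Set ℕ := {k | ∃ π, π ∈ Feas ∧ (∀ π' ∈ Feas, ∑ h, π h * c h ≤ ∑ h, π' h * c h) ∧
      {h | π h ≠ 0}.ncard = k} with hTdef
  have hTne : T.Nonempty :=
    ⟨_, πm, hπmF, fun π' hπ' => hπmmin hπ', rfl⟩
  obtain ⟨π, hπF, hπmin, hπcard⟩ := Nat.sInf_mem hTne
  refine ⟨π, hπF, fun π' hπ' => hπmin π' hπ', ?_⟩
  by_contra hbig
  push_neg at hbig
  -- extract three distinct support elements
  set s : Set H := {h | π h ≠ 0} with hsdef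
  have hsfin : s.Finite := Set.toFinite s
  have h3le : 3 ≤ hsfin.toFinset.card := by
    have heq := Set.ncard_eq_toFinset_card s hsfin
    omega
  obtain ⟨h1, hh1⟩ := Finset.card_pos.1 (by omega : 0 < hsfin.toFinset.card)
  have hcard1 : 2 ≤ (hsfin.toFinset.erase h1).card := by
    rw [Finset.card_erase_of_mem hh1]; omega
  obtain ⟨h2, hh2⟩ := Finset.card_pos.1 (by omega : 0 < (hsfin.toFinset.erase h1).card)
  have hcard2 : 1 ≤ ((hsfin.toFinset.erase h1).erase h2).card := by
    rw [Finset.card_erase_of_mem hh2]; omega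
  obtain ⟨h3, hh3⟩ := Finset.card_pos.1 (by omega : 0 < ((hsfin.toFinset.erase h1).erase h2).card)
  have h21 : h2 ≠ h1 := (Finset.mem_erase.1 hh2).1
  have h32 : h3 ≠ h2 := (Finset.mem_erase.1 hh3).1
  have h31 : h3 ≠ h1 := (Finset.mem_erase.1 (Finset.mem_erase.1 hh3).2).1
  have hs1 : π h1 ≠ 0 := (hsfin.mem_toFinset.1 hh1)
  have hs2 : π h2 ≠ 0 := (hsfin.mem_toFinset.1 (Finset.mem_erase.1 hh2).2)
  have hs3 : π h3 ≠ 0 := (hsfin.mem_toFinset.1 (Finset.mem_erase.1 (Finset.mem_erase.1 hh3).2).2)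
  -- the perturbation direction
  obtain ⟨α, β, δ, habc, hdot, hnz⟩ :
      ∃ α β δ : ℝ, α + β + δ = 0 ∧ α * g h1 + β * g h2 + δ * g h3 = 0 ∧
        (α ≠ 0 ∨ β ≠ 0 ∨ δ ≠ 0) := by
    by_cases hg : g h1 = g h2
    · exact ⟨1, -1, 0, by ring, by rw [hg]; ring, Or.inl one_ne_zero⟩
    · exact ⟨g h3 - g h2, g h1 - g h3, g h2 - g h1, by ring, by ring,
        Or.inr (Or.inr (sub_ne_zero.2 (Ne.symm hg)))⟩
  set d : H → ℝ := fun h => if h = h1 then α else if h = h2 then β else if h = h3 then δ else 0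
    with hddef
  have hd1 : d h1 = α := by simp [hddef]
  have hd2 : d h2 = β := by simp [hddef, h21]
  have hd3 : d h3 = δ := by simp [hddef, h31, h32]
  have hd0 : ∀ h, h ≠ h1 → h ≠ h2 → h ≠ h3 → d h = 0 := by
    intro h a b c'; simp [hddef, a, b, c']
  have hsum3 : ∀ f : H → ℝ, (∀ h, h ≠ h1 → h ≠ h2 → h ≠ h3 → f h = 0) →
      ∑ h, f h = f h1 + f h2 + f h3 := by
    intro f hf
    have hsub : ({h1, h2, h3} : Finset H) ⊆ Finset.univ := Finset.subset_univ _
    rw [← Finset.sum_subset hsub (fun h _ hm => by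
      simp only [Finset.mem_insert, Finset.mem_singleton, not_or] at hm
      exact hf h hm.1 hm.2.1 hm.2.2)]
    rw [Finset.sum_insert (by simp [h21.symm, h31.symm]),
      Finset.sum_insert (by simp [h32.symm]), Finset.sum_singleton]
    ring
  have hdsum : ∑ h, d h = 0 := by
    rw [hsum3 d hd0, hd1, hd2, hd3]; exact habc
  have hdg : ∑ h, d h * g h = 0 := by
    have heq := hsum3 (fun h => d h * g h) (fun h a b c' => by simp [hd0 h a b c'])
    simp only [hd1, hd2, hd3] at heq
    rw [heq]; exact hdot
  have hdsupp : ∀ h, π h = 0 → d h = 0 := by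
    intro h hh
    by_cases a : h = h1; · exact absurd (a ▸ hh) hs1
    by_cases b : h = h2; · exact absurd (b ▸ hh) hs2
    by_cases c' : h = h3; · exact absurd (c' ▸ hh) hs3
    exact hd0 h a b c'
  have hlin : ∀ (t : ℝ) (f : H → ℝ),
      ∑ h, (π h + t * d h) * f h = (∑ h, π h * f h) + t * ∑ h, d h * f h := by
    intro t f
    rw [Finset.mul_sum, ← Finset.sum_add_distrib]
    exact Finset.sum_congr rfl fun h _ => by ring
  have hlin1 : ∀ t : ℝ, ∑ h, (π h + t * d h) = 1 := by
    intro t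
    have := hlin t (fun _ => 1)
    simp only [mul_one] at this
    rw [this, hπF.2.1, hdsum, mul_zero, add_zero]
  -- feasibility of small perturbations
  have hπpos : ∀ h, d h ≠ 0 → 0 < π h := by
    intro h hh
    rcases lt_or_eq_of_le (hπF.1 h) with h' | h'
    · exact h'
    · exact absurd (hdsupp h h'.symm) hh
  have hfeas_pert : ∀ t : ℝ, (∀ h, 0 ≤ π h + t * d h) → (fun h => π h + t * d h) ∈ Feas := by
    intro t hnn
    refine ⟨hnn, hlin1 t, ?_⟩
    show |∑ h, (π h + t * d h) * g h| ≤ γ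
    rw [hlin t g, hdg, mul_zero, add_zero]
    exact hπF.2.2
  -- small ε
  set M : ℝ := |α| + |β| + |δ| + 1 with hMdef
  have hM : 0 < M := by positivity
  have hdM : ∀ h, |d h| ≤ M := by
    intro h
    have h0 : 0 ≤ |α| := abs_nonneg _
    have h0' : 0 ≤ |β| := abs_nonneg _
    have h0'' : 0 ≤ |δ| := abs_nonneg _
    by_cases a : h = h1; · rw [a, hd1]; simp [hMdef]; linarith
    by_cases b : h = h2; · rw [b, hd2]; simp [hMdef]; linarith
    by_cases c' : h = h3; · rw [c', hd3]; simp [hMdef]; linarith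
    rw [hd0 h a b c']; simp; positivity
  set p : ℝ := min (π h1) (min (π h2) (π h3)) with hpdef
  have hp : 0 < p := by
    rcases hπF.1 h1 with _
    apply lt_min
    · exact lt_of_le_of_ne (hπF.1 h1) (Ne.symm hs1)
    apply lt_min
    · exact lt_of_le_of_ne (hπF.1 h2) (Ne.symm hs2)
    · exact lt_of_le_of_ne (hπF.1 h3) (Ne.symm hs3)
  set ε : ℝ := p / M with hεdef
  have hε : 0 < ε := div_pos hp hM
  have hnnpert : ∀ t : ℝ, |t| ≤ ε → ∀ h, 0 ≤ π h + t * d h := by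
    intro t ht h
    by_cases hdh : d h = 0
    · rw [hdh, mul_zero, add_zero]; exact hπF.1 h
    · have hπh : p ≤ π h := by
        by_cases a : h = h1; · rw [a]; exact min_le_left _ _
        by_cases b : h = h2
        · rw [b]; exact le_trans (min_le_right _ _) (min_le_left _ _)
        by_cases c' : h = h3
        · rw [c']; exact le_trans (min_le_right _ _) (min_le_right _ _)
        · exact absurd (hd0 h a b c') hdh
      have habs : |t * d h| ≤ p := by
        rw [abs_mul]
        calc |t| * |d h| ≤ ε * M :=
          mul_le_mul ht (hdM h) (abs_nonneg _) (le_of_lt hε)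
        _ = p := by rw [hεdef]; field_simp
      have := neg_abs_le (t * d h)
      linarith
  -- the directional derivative of the cost vanishes
  have hC : ∑ h, d h * c h = 0 := by
    have hpos' := hπmin _ (hfeas_pert ε (hnnpert ε (by rw [abs_of_pos hε])))
    have hneg' := hπmin _ (hfeas_pert (-ε) (hnnpert (-ε) (by rw [abs_neg, abs_of_pos hε])))
    rw [hlin ε c] at hpos'
    rw [hlin (-ε) c] at hneg'
    nlinarith [hε]
  -- pick the exit point
  have hdnegex : ∃ h, d h < 0 := by
    by_contra hcon
    push_neg at hcon
    have hall := (Finset.sum_eq_zero_iff_of_nonneg (fun h _ => hcon h)).1 hdsum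
    rcases hnz with h' | h' | h'
    · exact h' (by rw [← hd1]; exact hall h1 (Finset.mem_univ _))
    · exact h' (by rw [← hd2]; exact hall h2 (Finset.mem_univ _))
    · exact h' (by rw [← hd3]; exact hall h3 (Finset.mem_univ _))
  obtain ⟨hneg0, hhneg0⟩ := hdnegex
  have hFne : (Finset.univ.filter fun h => d h < 0).Nonempty :=
    ⟨hneg0, Finset.mem_filter.2 ⟨Finset.mem_univ _, hhneg0⟩⟩
  obtain ⟨h0, hh0F, hh0min⟩ := Finset.exists_min_image _ (fun h => π h / (-d h)) hFne
  have hdh0 : d h0 < 0 := (Finset.mem_filter.1 hh0F).2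
  have hπh0 : 0 < π h0 := hπpos h0 (ne_of_lt hdh0)
  set t : ℝ := π h0 / (-d h0) with htdef
  have ht : 0 < t := div_pos hπh0 (neg_pos.2 hdh0)
  set π' : H → ℝ := fun h => π h + t * d h with hπ'def
  have hπ'nn : ∀ h, 0 ≤ π' h := by
    intro h
    by_cases hdh : d h < 0
    · have hle : t ≤ π h / (-d h) := hh0min h (Finset.mem_filter.2 ⟨Finset.mem_univ _, hdh⟩)
      have : t * (-d h) ≤ π h := (le_div_iff₀ (neg_pos.2 hdh)).1 hle
      simp only [hπ'def]
      nlinarith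
    · push_neg at hdh
      exact add_nonneg (hπF.1 h) (mul_nonneg (le_of_lt ht) hdh)
  have hπ'h0 : π' h0 = 0 := by
    have hne0 : -d h0 ≠ 0 := ne_of_gt (neg_pos.2 hdh0)
    simp only [hπ'def, htdef]
    field_simp
    rw [div_self (ne_of_lt hdh0)]; ring
  have hπ'F : π' ∈ Feas := hfeas_pert t hπ'nn
  have hπ'min : ∀ π'' ∈ Feas, ∑ h, π' h * c h ≤ ∑ h, π'' h * c h := by
    intro π'' hπ''
    have : ∑ h, π' h * c h = ∑ h, π h * c h := by
      show ∑ h, (π h + t * d h) * c h = _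
      rw [hlin t c, hC, mul_zero, add_zero]
    rw [this]
    exact hπmin π'' hπ''
  have hssub : {h | π' h ≠ 0} ⊂ s := by
    constructor
    · intro h hh
      simp only [Set.mem_setOf_eq] at hh ⊢
      intro hzero
      exact hh (by simp only [hπ'def, hdsupp h hzero, hzero, mul_zero, add_zero])
    · intro hsub
      have : π h0 ≠ 0 := ne_of_gt hπh0
      have := hsub this
      simp only [Set.mem_setOf_eq] at this
      exact this hπ'h0
  have hlt : {h | π' h ≠ 0}.ncard < s.ncard := Set.ncard_lt_ncard hssub hsfin
  have hmem : {h | π' h ≠ 0}.ncard ∈ T := ⟨π', hπ'F, hπ'min, rfl⟩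
  have := Nat.sInf_le hmem
  omega


/-- The fair cost-sensitive classification problem -- minimizing a
cost-sensitive objective over distributions `π ∈ Δ(H)` subject to
`|Δ_FPR(π, D_E)| ≤ γ` -- has an optimal solution supported on at most 2 hypotheses,
provided the feasible region is nonempty.  Labels and groups are encoded as `Bool`
(`true` = +1, `false` = −1). -/
theorem fairCSC_exists_optimal_sparse {X : Type*} [MeasurableSpace X]
    {H : Type*} [Fintype H] (hyp : H → X × Bool → Bool)
    (DE : Measure (X × Bool × Bool)) [IsProbabilityMeasure DE]
    (hpos : ∀ j : Bool, 0 < DE {p | p.2.1 = j ∧ p.2.2 = false})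
    (n : ℕ) (xs : Fin n → X × Bool) (cneg cpos : Fin n → ℝ)
    (γ : ℝ) (hγ : 0 ≤ γ)
    -- false positive rate of `π ∈ Δ(H)` on group `j`, w.r.t. `D_E`
    (FPR : Bool → (H → ℝ) → ℝ)
    (hFPR : ∀ j π, FPR j π = ∑ h, π h *
      ((DE {p | hyp h (p.1, p.2.1) = true ∧ p.2.1 = j ∧ p.2.2 = false}).toReal /
        (DE {p | p.2.1 = j ∧ p.2.2 = false}).toReal))
    -- expected cost `E_{h∼π}[ Σ_j c_j^{h(x_j)} ]`
    (cost : (H → ℝ) → ℝ)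
    (hcost : ∀ π, cost π =
      ∑ h, π h * ∑ j, (if hyp h (xs j) = true then cpos j else cneg j))
    (hne : ∃ π : H → ℝ, (∀ h, 0 ≤ π h) ∧ (∑ h, π h) = 1 ∧
      |FPR true π - FPR false π| ≤ γ) :
    ∃ π : H → ℝ,
      ((∀ h, 0 ≤ π h) ∧ (∑ h, π h) = 1 ∧ |FPR true π - FPR false π| ≤ γ) ∧
      (∀ π' : H → ℝ,
        ((∀ h, 0 ≤ π' h) ∧ (∑ h, π' h) = 1 ∧ |FPR true π' - FPR false π'| ≤ γ) →
        cost π ≤ cost π') ∧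
      {h | π h ≠ 0}.ncard ≤ 2 := by
  classical
  set A : Bool → H → ℝ := fun j h =>
    (DE {p | hyp h (p.1, p.2.1) = true ∧ p.2.1 = j ∧ p.2.2 = false}).toReal /
      (DE {p | p.2.1 = j ∧ p.2.2 = false}).toReal with hAdef
  have hδ : ∀ π : H → ℝ, FPR true π - FPR false π = ∑ h, π h * (A true h - A false h) := by
    intro π
    rw [hFPR true π, hFPR false π, ← Finset.sum_sub_distrib]
    exact Finset.sum_congr rfl fun h _ => by rw [hAdef]; ring
  have hne' : ∃ π : H → ℝ, (∀ h, 0 ≤ π h) ∧ (∑ h, π h) = 1 ∧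
      |∑ h, π h * (A true h - A false h)| ≤ γ := by
    obtain ⟨π, h1, h2, h3⟩ := hne
    exact ⟨π, h1, h2, by rw [← hδ]; exact h3⟩
  obtain ⟨π, ⟨hnn, hsum, habs⟩, hmin, hcard⟩ :=
    sparse_key (fun h => ∑ j, (if hyp h (xs j) = true then cpos j else cneg j))
      (fun h => A true h - A false h) γ hne'
  refine ⟨π, ⟨hnn, hsum, by rw [hδ]; exact habs⟩, ?_, hcard⟩
  intro π' ⟨hnn', hsum', habs'⟩
  rw [hcost, hcost]
  exact hmin π' ⟨hnn', hsum', by rw [← hδ]; exact habs'⟩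
end

section
/- Let H be a finite class of classifiers h : X × {±1} → {0,1}, let D_E be a probability distribution on X × {±1} × {±1} with P_{D_E}(a = j, y = −1) > 0 for both j ∈ {±1}, and let err : Δ(H) → [0,1] be the linear functional err(π) = E_{h∼π}[ Σ_{j=1}^n w_j · 1{h(X_j) ≠ Y_j} ] for fixed examples (X_j, Y_j) and nonnegative weights w_j with Σ_j w_j = 1. Assume H contains the two classifiers 1[a = +1] and 1[a = −1] (the classifier 1[a = j] predicts 1 exactly when the group attribute equals j, so FPR_j(1[a=j], D_E) = 1 and FPR_{−j}(1[a=j], D_E) = 0). Fix γ ≥ 0 and ν ≥ 0, and define the Lagrangian L(π, λ) = err(π) + λ_{+1}(FPR_{+1}(π,D_E) − FPR_{−1}(π,D_E) − γ) + λ_{−1}(FPR_{−1}(π,D_E) − FPR_{+1}(π,D_E) − γ) for π ∈ Δ(H) and λ in the restricted dual set Λ = {λ ∈ ℝ²_{≥0} : λ_{+1} + λ_{−1} ≤ 2}. Suppose (π̂, λ̂) ∈ Δ(H) × Λ is a ν-approximate saddle point, meaning L(π̂, λ̂) ≤ L(π, λ̂) + ν for all π ∈ Δ(H) and L(π̂,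 λ̂) ≥ L(π̂, λ) − ν for all λ ∈ Λ. Then err(π̂) ≤ OPT + 2ν, and FPR_j(π̂, D_E) − FPR_{−j}(π̂, D_E) ≤ γ + 2ν for both j ∈ {±1}, where OPT = min{ err(π) : π ∈ Δ(H), |FPR_{+1}(π,D_E) − FPR_{−1}(π,D_E)| ≤ γ }. -/
/-!
For the objective, test the dual player against `λ = 0` and the primal player against a
feasible `π`, on which both penalty terms are nonpositive. For the constraint of group `j`, test
the dual player against the vertex `λ = 2 e_j` of `Λ` and the primal player against the pure
strategy `1[a = −j]`, whose disparity `FPR_j − FPR_{−j}` is `−1` and whose error is at most `1`.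
With `v` the excess disparity of `π̂` and `c = 2 − λ̂_j + λ̂_{−j}`, this gives `c v ≤ ν` and
`c ≥ 1 + 2 (v − ν)`, which force `v ≤ ν`.
-/

open MeasureTheory Set

section Lagrangian

variable {α : Type*} {f D : α → ℝ} {γ ν a b : ℝ} {xhat x : α}

/-- The paper's `L(π, λ)` is
`twoSidedLagrangian err (FPR_{+1} − FPR_{−1}) γ π λ_{+1} λ_{−1}`. -/
def twoSidedLagrangian (f D : α → ℝ) (γ : ℝ) (x : α) (a b : ℝ) : ℝ :=
  f x + a * (D x - γ) + b * (-D x - γ)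

theorem le_add_two_mul_of_approx_saddle (ha : 0 ≤ a) (hb : 0 ≤ b)
    (hdual : twoSidedLagrangian f D γ xhat 0 0 - ν ≤ twoSidedLagrangian f D γ xhat a b)
    (hprimal : twoSidedLagrangian f D γ xhat a b ≤ twoSidedLagrangian f D γ x a b + ν)
    (hx : |D x| ≤ γ) : f xhat ≤ f x + 2 * ν := by
  unfold twoSidedLagrangian at hdual hprimal
  rw [abs_le] at hx
  have hpenalty : a * (D x - γ) + b * (-D x - γ) ≤ 0 := by
    nlinarith [mul_nonneg ha (by linarith : 0 ≤ γ - D x),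
      mul_nonneg hb (by linarith : 0 ≤ γ + D x)]
  linarith

theorem sub_le_of_approx_saddle (hγ : 0 ≤ γ) (hν : 0 ≤ ν) (ha : 0 ≤ a) (hb : 0 ≤ b)
    (hf : 0 ≤ f xhat) (hfx : f x ≤ 1) (hDx : D x = -1)
    (hdual : twoSidedLagrangian f D γ xhat 2 0 - ν ≤ twoSidedLagrangian f D γ xhat a b)
    (hprimal : twoSidedLagrangian f D γ xhat a b ≤ twoSidedLagrangian f D γ x a b + ν) :
    D xhat - γ ≤ ν := by
  unfold twoSidedLagrangian at hdual hprimal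
  rw [hDx] at hprimal
  have hviolation : (2 - a + b) * (D xhat - γ) ≤ ν := by nlinarith [mul_nonneg hb hγ]
  have hmultiplier : 1 + 2 * (D xhat - γ - ν) ≤ 2 - a + b := by
    nlinarith [mul_nonneg ha hγ, mul_nonneg hb hγ]
  by_contra! h
  nlinarith [mul_pos (by linarith : 0 < 1 - a + b) (by linarith : 0 < D xhat - γ)]

end Lagrangian

section FalsePositiveRate

variable {X : Type*} [MeasurableSpace X]

/-- `P_DE(c(x, a) = 1 | a = j, y = −1)`. -/
noncomputable def falsePositiveRate (DE : Measure (X × Bool × Bool)) (c : X × Bool → Bool)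
    (j : Bool) : ℝ :=
  (DE {p | c (p.1, p.2.1) = true ∧ p.2.1 = j ∧ p.2.2 = false}).toReal /
    (DE {p | p.2.1 = j ∧ p.2.2 = false}).toReal

variable {DE : Measure (X × Bool × Bool)} {c : X × Bool → Bool} {j : Bool}

theorem falsePositiveRate_eq_zero (hc : ∀ x, c (x, j) = false) :
    falsePositiveRate DE c j = 0 := by
  have hempty :
      {p : X × Bool × Bool | c (p.1, p.2.1) = true ∧ p.2.1 = j ∧ p.2.2 = false} = ∅ := by
    ext ⟨x, a, y⟩
    simp only [mem_ofPred_eq, mem_empty_iff_false, iff_false, not_and]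
    rintro hcx rfl
    simp [hc] at hcx
  simp [falsePositiveRate, hempty]

theorem falsePositiveRate_eq_one [IsFiniteMeasure DE] (hc : ∀ x, c (x, j) = true)
    (hpos : DE {p | p.2.1 = j ∧ p.2.2 = false} ≠ 0) : falsePositiveRate DE c j = 1 := by
  have hgroup : {p : X × Bool × Bool | c (p.1, p.2.1) = true ∧ p.2.1 = j ∧ p.2.2 = false} =
      {p | p.2.1 = j ∧ p.2.2 = false} := by
    ext ⟨x, a, y⟩
    simp only [mem_ofPred_eq, and_iff_right_iff_imp, and_imp]
    rintro rfl _
    exact hc x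
  rw [falsePositiveRate, hgroup, div_self]
  exact ENNReal.toReal_ne_zero.mpr ⟨hpos, measure_ne_top _ _⟩

end FalsePositiveRate

theorem mixture_weighted_loss_mem_Icc {H ι : Type*} [Fintype H] [Fintype ι] {π : H → ℝ}
    {w : ι → ℝ} (hπ : π ∈ stdSimplex ℝ H) (hw : w ∈ stdSimplex ℝ ι) (mistake : H → ι → Prop)
    [∀ h i, Decidable (mistake h i)] :
    ∑ h, π h * ∑ i, w i * (if mistake h i then (1 : ℝ) else 0) ∈ Icc 0 1 :=
  have hIcc := convex_Icc (0 : ℝ) 1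
  hIcc.sum_mem (fun h _ => hπ.1 h) hπ.2 fun h _ =>
    hIcc.sum_mem (fun i _ => hw.1 i) hw.2 fun i _ => by split_ifs <;> simp

theorem exists_classifier_off_group {X H : Type*} {hyp : H → X × Bool → Bool}
    (hplus : ∃ k, hyp k = fun p => p.2) (hminus : ∃ k, hyp k = fun p => !p.2) (j : Bool) :
    ∃ k, (∀ x, hyp k (x, j) = false) ∧ ∀ x, hyp k (x, !j) = true := by
  cases j
  · obtain ⟨k, hk⟩ := hplus
    exact ⟨k, by simp [hk]⟩
  · obtain ⟨k, hk⟩ := hminus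
    exact ⟨k, by simp [hk]⟩

/-- guarantee of a ν-approximate saddle point of the restricted
Lagrangian for fair cost-sensitive (weighted) classification.  Classifiers output
`Bool` with `true` = 1 (positive prediction); groups `j` and labels are `Bool`
(`true` = +1, `false` = −1 for `y`). -/
theorem approx_saddle_point_guarantee {X : Type*} [MeasurableSpace X]
    {H : Type*} [Fintype H] (hyp : H → X × Bool → Bool)
    (DE : Measure (X × Bool × Bool)) [IsProbabilityMeasure DE]
    (hpos : ∀ j : Bool, 0 < DE {p | p.2.1 = j ∧ p.2.2 = false})
    -- H contains the classifiers 1[a = +1] and 1[a = −1]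
    (hplus : ∃ k : H, hyp k = fun p => p.2)
    (hminus : ∃ k : H, hyp k = fun p => !p.2)
    -- the weighted classification objective
    (n : ℕ) (Xs : Fin n → X × Bool) (Ys : Fin n → Bool) (w : Fin n → ℝ)
    (hw : ∀ j, 0 ≤ w j) (hw1 : (∑ j, w j) = 1)
    (err : (H → ℝ) → ℝ)
    (herr : ∀ π, err π =
      ∑ h, π h * ∑ j, w j * (if hyp h (Xs j) ≠ Ys j then (1 : ℝ) else 0))
    -- false positive rates
    (FPR : Bool → (H → ℝ) → ℝ)
    (hFPR : ∀ j π, FPR j π = ∑ h, π h *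
      ((DE {p | hyp h (p.1, p.2.1) = true ∧ p.2.1 = j ∧ p.2.2 = false}).toReal /
        (DE {p | p.2.1 = j ∧ p.2.2 = false}).toReal))
    (γ ν : ℝ) (hγ : 0 ≤ γ) (hν : 0 ≤ ν)
    -- the Lagrangian on Δ(H) × Λ
    (L : (H → ℝ) → (Bool → ℝ) → ℝ)
    (hL : ∀ π lam, L π lam = err π
      + lam true * (FPR true π - FPR false π - γ)
      + lam false * (FPR false π - FPR true π - γ))
    -- (π̂, λ̂) is a ν-approximate saddle point over Δ(H) × Λ
    (πhat : H → ℝ) (hπhat : (∀ h, 0 ≤ πhat h) ∧ (∑ h, πhat h) = 1)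
    (lamhat : Bool → ℝ)
    (hlamhat : (∀ j, 0 ≤ lamhat j) ∧ lamhat true + lamhat false ≤ 2)
    (hsaddle1 : ∀ π : H → ℝ, ((∀ h, 0 ≤ π h) ∧ (∑ h, π h) = 1) →
      L πhat lamhat ≤ L π lamhat + ν)
    (hsaddle2 : ∀ lam : Bool → ℝ,
      ((∀ j, 0 ≤ lam j) ∧ lam true + lam false ≤ 2) →
      L πhat lam - ν ≤ L πhat lamhat) :
    -- err(π̂) ≤ OPT + 2ν, and near-feasibility of π̂
    (∀ π : H → ℝ, ((∀ h, 0 ≤ π h) ∧ (∑ h, π h) = 1 ∧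
        |FPR true π - FPR false π| ≤ γ) →
      err πhat ≤ err π + 2 * ν) ∧
    (∀ j : Bool, FPR j πhat - FPR (!j) πhat ≤ γ + 2 * ν) := by
  classical
  have herr_mem : ∀ π ∈ stdSimplex ℝ H, err π ∈ Icc 0 1 := fun π hπ =>
    herr π ▸ mixture_weighted_loss_mem_Icc hπ ⟨hw, hw1⟩ _
  have hLagrangian : ∀ j π lam, L π lam = twoSidedLagrangian err
      (fun π => FPR j π - FPR (!j) π) γ π (lam j) (lam !j) := fun j π lam => by
    cases j <;> simp only [hL, twoSidedLagrangian, Bool.not_false, Bool.not_true] <;> ring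
  obtain ⟨hlam_nonneg, -⟩ := hlamhat
  refine ⟨fun π ⟨hπ0, hπ1, hfeas⟩ => ?_, fun j => ?_⟩
  · refine le_add_two_mul_of_approx_saddle (D := fun π => FPR true π - FPR false π)
      (hlam_nonneg true) (hlam_nonneg false) ?_ ?_ hfeas
    · simpa [hLagrangian true] using hsaddle2 0 ⟨fun _ => le_rfl, by norm_num⟩
    · simpa [hLagrangian true] using hsaddle1 π ⟨hπ0, hπ1⟩
  obtain ⟨k, hk_j, hk_not_j⟩ := exists_classifier_off_group hplus hminus j
  have hFPR_single : ∀ i, FPR i (Pi.single k 1) = falsePositiveRate DE (hyp k) i := fun i =>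
    (hFPR i _).trans (single_one_dotProduct k _)
  have hdisparity : FPR j (Pi.single k 1) - FPR (!j) (Pi.single k 1) = -1 := by
    rw [hFPR_single, hFPR_single, falsePositiveRate_eq_zero hk_j,
      falsePositiveRate_eq_one hk_not_j (hpos _).ne', zero_sub]
  have hdual_vertex := hsaddle2 (Pi.single j 2)
    ⟨fun i => by by_cases hij : i = j <;> simp [hij], by cases j <;> norm_num⟩
  have hviolation := sub_le_of_approx_saddle (D := fun π => FPR j π - FPR (!j) π) hγ hν
    (hlam_nonneg j) (hlam_nonneg !j) (herr_mem πhat hπhat).1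
    (herr_mem _ (single_mem_stdSimplex ℝ k)).2 hdisparity
    (by simpa [hLagrangian j] using hdual_vertex)
    (by simpa [hLagrangian j] using hsaddle1 _ (single_mem_stdSimplex ℝ k))
  linarith
end

section
/- Let H be a finite class of classifiers h : X × {±1} → {0,1}, let D_E be a probability distribution on X × {±1} × {±1} with P_{D_E}(a = j, y = −1) > 0 for both j ∈ {±1}, and let err : Δ(H) → [0,1] be a linear functional with err(π) = E_{h∼π}[err(h)] and err(h) ∈ [0,1] for each h ∈ H. Assume H contains the two classifiers 1[a = +1] and 1[a = −1], where 1[a = j] satisfies FPR_j(1[a=j], D_E) = 1 and FPR_{−j}(1[a=j], D_E) = 0. Fix γ and ν with 0 < 2ν < γ. Define OPT = min{ err(π) : π ∈ Δ(H), |FPR_{+1}(π,D_E) − FPR_{−1}(π,D_E)| ≤ γ } and OPT' = min{ err(π) : π ∈ Δ(H), |FPR_{+1}(π,D_E) − FPR_{−1}(π,D_E)| ≤ γ − 2ν } (both feasible regions are nonempty). Then OPT' ≤ OPT + 2ν. -/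
open MeasureTheory

lemma sum_mix_aux {H : Type*} [Fintype H] [DecidableEq H] (π f : H → ℝ) (k : H) (lam : ℝ) :
    ∑ h, ((1 - lam) * π h + lam * (if h = k then 1 else 0)) * f h
      = (1 - lam) * (∑ h, π h * f h) + lam * f k := by
  have e : ∀ h : H, ((1 - lam) * π h + lam * (if h = k then 1 else 0)) * f h
      = (1 - lam) * (π h * f h) + lam * (if h = k then f h else 0) := by
    intro h; by_cases hk : h = k <;> simp [hk] <;> ring
  simp_rw [e, Finset.sum_add_distrib, ← Finset.mul_sum]
  rw [Finset.sum_ite_eq' Finset.univ k f, if_pos (Finset.mem_univ k)]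

/-- bound on the additional error from tightening the fairness
constraint: `OPT' ≤ OPT + 2ν`, stated as: for every policy feasible for the
`γ`-constraint there is a policy feasible for the tightened `(γ - 2ν)`-constraint
whose error is larger by at most `2ν`. -/
theorem tightening_error_bound {X : Type*} [MeasurableSpace X]
    {H : Type*} [Fintype H] (hyp : H → X × Bool → Bool)
    (DE : Measure (X × Bool × Bool)) [IsProbabilityMeasure DE]
    (hpos : ∀ j : Bool, 0 < DE {p | p.2.1 = j ∧ p.2.2 = false})
    -- H contains the classifiers 1[a = +1] and 1[a = −1]
    (hplus : ∃ k : H, hyp k = fun p => p.2)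
    (hminus : ∃ k : H, hyp k = fun p => !p.2)
    -- a linear error functional on Δ(H) with values in [0,1]
    (errh : H → ℝ) (herrh : ∀ h, errh h ∈ Set.Icc (0:ℝ) 1)
    (err : (H → ℝ) → ℝ) (herr : ∀ π, err π = ∑ h, π h * errh h)
    -- false positive rates
    (FPR : Bool → (H → ℝ) → ℝ)
    (hFPR : ∀ j π, FPR j π = ∑ h, π h *
      ((DE {p | hyp h (p.1, p.2.1) = true ∧ p.2.1 = j ∧ p.2.2 = false}).toReal /
        (DE {p | p.2.1 = j ∧ p.2.2 = false}).toReal))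
    (γ ν : ℝ) (hν : 0 < ν) (hγν : 2 * ν < γ) :
    ∀ π : H → ℝ, ((∀ h, 0 ≤ π h) ∧ (∑ h, π h) = 1 ∧
        |FPR true π - FPR false π| ≤ γ) →
      ∃ π' : H → ℝ, ((∀ h, 0 ≤ π' h) ∧ (∑ h, π' h) = 1 ∧
        |FPR true π' - FPR false π'| ≤ γ - 2 * ν) ∧
        err π' ≤ err π + 2 * ν := by
  classical
  obtain ⟨kp, hkp⟩ := hplus
  obtain ⟨km, hkm⟩ := hminus
  rintro π ⟨hπ0, hπ1, hπγ⟩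
  have ht : (0:ℝ) < γ - 2 * ν := by linarith
  have hden : ∀ j : Bool, 0 < (DE {p : X × Bool × Bool | p.2.1 = j ∧ p.2.2 = false}).toReal :=
    fun j => ENNReal.toReal_pos (hpos j).ne' (measure_ne_top _ _)
  -- the FPRs of the two indicator classifiers
  have hrp1 : (DE {p : X × Bool × Bool |
      hyp kp (p.1, p.2.1) = true ∧ p.2.1 = true ∧ p.2.2 = false}).toReal /
      (DE {p : X × Bool × Bool | p.2.1 = true ∧ p.2.2 = false}).toReal = 1 := by
    have hset : {p : X × Bool × Bool | hyp kp (p.1, p.2.1) = true ∧ p.2.1 = true ∧ p.2.2 = false}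
        = {p : X × Bool × Bool | p.2.1 = true ∧ p.2.2 = false} := by
      ext p
      simp only [hkp, Set.mem_setOf_eq]
      exact ⟨fun ⟨_, h2, h3⟩ => ⟨h2, h3⟩, fun ⟨h2, h3⟩ => ⟨h2, h2, h3⟩⟩
    rw [hset, div_self (hden true).ne']
  have hrp0 : (DE {p : X × Bool × Bool |
      hyp kp (p.1, p.2.1) = true ∧ p.2.1 = false ∧ p.2.2 = false}).toReal /
      (DE {p : X × Bool × Bool | p.2.1 = false ∧ p.2.2 = false}).toReal = 0 := by
    have hset : {p : X × Bool × Bool | hyp kp (p.1, p.2.1) = true ∧ p.2.1 = false ∧ p.2.2 = false}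
        = (∅ : Set (X × Bool × Bool)) := by
      ext p
      simp only [hkp, Set.mem_setOf_eq, Set.mem_empty_iff_false, iff_false]
      rintro ⟨h1, h2, h3⟩
      simp [h2] at h1
    rw [hset]; simp
  have hrm0 : (DE {p : X × Bool × Bool |
      hyp km (p.1, p.2.1) = true ∧ p.2.1 = true ∧ p.2.2 = false}).toReal /
      (DE {p : X × Bool × Bool | p.2.1 = true ∧ p.2.2 = false}).toReal = 0 := by
    have hset : {p : X × Bool × Bool | hyp km (p.1, p.2.1) = true ∧ p.2.1 = true ∧ p.2.2 = false}
        = (∅ : Set (X × Bool × Bool)) := by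
      ext p
      simp only [hkm, Set.mem_setOf_eq, Set.mem_empty_iff_false, iff_false]
      rintro ⟨h1, h2, h3⟩
      simp [h2] at h1
    rw [hset]; simp
  have hrm1 : (DE {p : X × Bool × Bool |
      hyp km (p.1, p.2.1) = true ∧ p.2.1 = false ∧ p.2.2 = false}).toReal /
      (DE {p : X × Bool × Bool | p.2.1 = false ∧ p.2.2 = false}).toReal = 1 := by
    have hset : {p : X × Bool × Bool | hyp km (p.1, p.2.1) = true ∧ p.2.1 = false ∧ p.2.2 = false}
        = {p : X × Bool × Bool | p.2.1 = false ∧ p.2.2 = false} := by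
      ext p
      simp only [hkm, Set.mem_setOf_eq, Bool.not_eq_true']
      exact ⟨fun ⟨_, h2, h3⟩ => ⟨h2, h3⟩, fun ⟨h2, h3⟩ => ⟨h2, h2, h3⟩⟩
    rw [hset, div_self (hden false).ne']
  have herrπ0 : 0 ≤ err π := by
    rw [herr]
    exact Finset.sum_nonneg fun h _ => mul_nonneg (hπ0 h) (herrh h).1
  obtain ⟨hdγ', hdγ⟩ := abs_le.mp hπγ
  set d := FPR true π - FPR false π with hd
  -- generic facts about mixtures
  have mixgood : ∀ (k : H) (lam : ℝ), 0 ≤ lam → lam ≤ 1 →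
      (∀ h, 0 ≤ (1 - lam) * π h + lam * (if h = k then 1 else 0)) ∧
      (∑ h, ((1 - lam) * π h + lam * (if h = k then 1 else 0))) = 1 := by
    intro k lam h0 h1
    constructor
    · intro h
      apply add_nonneg (mul_nonneg (by linarith) (hπ0 h))
      apply mul_nonneg h0
      by_cases hk : h = k <;> simp [hk]
    · rw [Finset.sum_add_distrib, ← Finset.mul_sum, ← Finset.mul_sum, hπ1,
        Finset.sum_ite_eq' Finset.univ k (fun _ => (1:ℝ)), if_pos (Finset.mem_univ k)]
      ring
  rcases le_or_gt |d| (γ - 2 * ν) with hc | hc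
  · exact ⟨π, ⟨hπ0, hπ1, hc⟩, by linarith⟩
  rcases lt_abs.mp hc with hcase | hcase
  · -- d > γ - 2ν : mix toward the classifier 1[a = −1]
    set lam : ℝ := (d - (γ - 2 * ν)) / (1 + d) with hlam
    have h1d : (0:ℝ) < 1 + d := by linarith
    have hlam0 : 0 ≤ lam := div_nonneg (by linarith) h1d.le
    have hlam1 : lam ≤ 1 := by rw [div_le_one h1d]; linarith
    have hlam2ν : lam ≤ 2 * ν := by
      have := div_le_self (by linarith : (0:ℝ) ≤ d - (γ - 2 * ν)) (by linarith : (1:ℝ) ≤ 1 + d)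
      linarith
    obtain ⟨hnn, hsum⟩ := mixgood km lam hlam0 hlam1
    refine ⟨fun h => (1 - lam) * π h + lam * (if h = km then 1 else 0), ⟨hnn, hsum, ?_⟩, ?_⟩
    · have e1 : FPR true (fun h => (1 - lam) * π h + lam * (if h = km then 1 else 0))
          = (1 - lam) * FPR true π := by
        rw [hFPR, hFPR, sum_mix_aux, hrm0]; ring
      have e2 : FPR false (fun h => (1 - lam) * π h + lam * (if h = km then 1 else 0))
          = (1 - lam) * FPR false π + lam := by
        rw [hFPR, hFPR, sum_mix_aux, hrm1]; ring
      have hmul : lam * (1 + d) = d - (γ - 2 * ν) := div_mul_cancel₀ _ h1d.ne'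
      have : (1 - lam) * FPR true π - ((1 - lam) * FPR false π + lam) = γ - 2 * ν := by
        have expand : (1 - lam) * FPR true π - ((1 - lam) * FPR false π + lam)
            = d - lam * (1 + d) := by rw [hd]; ring
        rw [expand, hmul]; ring
      rw [e1, e2, this, abs_of_nonneg ht.le]
    · have e3 : err (fun h => (1 - lam) * π h + lam * (if h = km then 1 else 0))
          = (1 - lam) * err π + lam * errh km := by
        rw [herr, herr, sum_mix_aux]
      rw [e3]
      have h1 : errh km - err π ≤ 1 := by have := (herrh km).2; linarith
      have h2 : lam * (errh km - err π) ≤ lam * 1 := mul_le_mul_of_nonneg_left h1 hlam0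
      nlinarith
  · -- -d > γ - 2ν : mix toward the classifier 1[a = +1]
    set lam : ℝ := (-d - (γ - 2 * ν)) / (1 - d) with hlam
    have h1d : (0:ℝ) < 1 - d := by linarith
    have hlam0 : 0 ≤ lam := div_nonneg (by linarith) h1d.le
    have hlam1 : lam ≤ 1 := by rw [div_le_one h1d]; linarith
    have hlam2ν : lam ≤ 2 * ν := by
      have := div_le_self (by linarith : (0:ℝ) ≤ -d - (γ - 2 * ν)) (by linarith : (1:ℝ) ≤ 1 - d)
      linarith
    obtain ⟨hnn, hsum⟩ := mixgood kp lam hlam0 hlam1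
    refine ⟨fun h => (1 - lam) * π h + lam * (if h = kp then 1 else 0), ⟨hnn, hsum, ?_⟩, ?_⟩
    · have e1 : FPR true (fun h => (1 - lam) * π h + lam * (if h = kp then 1 else 0))
          = (1 - lam) * FPR true π + lam := by
        rw [hFPR, hFPR, sum_mix_aux, hrp1]; ring
      have e2 : FPR false (fun h => (1 - lam) * π h + lam * (if h = kp then 1 else 0))
          = (1 - lam) * FPR false π := by
        rw [hFPR, hFPR, sum_mix_aux, hrp0]; ring
      have hmul : lam * (1 - d) = -d - (γ - 2 * ν) := div_mul_cancel₀ _ h1d.ne'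
      have : (1 - lam) * FPR true π + lam - (1 - lam) * FPR false π = -(γ - 2 * ν) := by
        have expand : (1 - lam) * FPR true π + lam - (1 - lam) * FPR false π
            = d + lam * (1 - d) := by rw [hd]; ring
        rw [expand, hmul]; ring
      rw [e1, e2, this, abs_neg, abs_of_nonneg ht.le]
    · have e3 : err (fun h => (1 - lam) * π h + lam * (if h = kp then 1 else 0))
          = (1 - lam) * err π + lam * errh kp := by
        rw [herr, herr, sum_mix_aux]
      rw [e3]
      have h1 : errh kp - err π ≤ 1 := by have := (herrh kp).2; linarith
      have h2 : lam * (errh kp - err π) ≤ lam * 1 := mul_le_mul_of_nonneg_left h1 hlam0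
      nlinarith
end
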